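/- arXiv:2006.07893 — 5 statements merged into one kernel-verified Lean document; each statement's English description precedes it below -/
import Mathlib

section
/- Let B₀ = ℚ[c₁,...,cₙ] and let c(z) = 1 - c₁z + c₂z² - ... + (-1)ⁿcₙzⁿ. Let Bᵣ = B₀[e₁,...,eᵣ] with Eᵣ(z) = 1 - e₁z + ... + (-1)ʳeᵣzʳ, and define hⱼ(c) by ∑ⱼ hⱼ(c)zʲ = c(z)/Eᵣ(z). Then in the quotient ring B_{r,n} = Bᵣ/(h_{n-r+1}(c),...,hₙ(c)), the polynomial Xⁿ(c) = Xⁿ - c₁X^{n-1} + ... + (-1)ⁿcₙ factors as the product of the two monic polynomials pᵣ(X) = Xʳ - e₁X^{r-1} + ... + (-1)ʳeᵣ and q(X) = X^{n-r} + h₁(c)X^{n-r-1} + ... + h_{n-r}(c). -/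
open PowerSeries Polynomial

set_option synthInstance.maxHeartbeats 1000000
set_option maxHeartbeats 1000000

noncomputable section

abbrev B0 (n : ℕ) : Type := MvPolynomial (Fin n) ℚ
abbrev Br (n r : ℕ) : Type := MvPolynomial (Fin r) (B0 n)

def cc (n : ℕ) : ℕ → B0 n
  | 0 => 1
  | i + 1 => if h : i < n then MvPolynomial.X ⟨i, h⟩ else 0

def ee (n r : ℕ) : ℕ → Br n r
  | 0 => 1
  | i + 1 => if h : i < r then MvPolynomial.X ⟨i, h⟩ else 0

/-- c(z) = ∑ (-1)^i cᵢ zⁱ, viewed over Bᵣ -/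
def cser (n r : ℕ) : PowerSeries (Br n r) :=
  PowerSeries.mk fun i => (-1) ^ i * MvPolynomial.C (cc n i)

/-- Eᵣ(z) = ∑ (-1)^i eᵢ zⁱ -/
def Eser (n r : ℕ) : PowerSeries (Br n r) :=
  PowerSeries.mk fun i => (-1) ^ i * ee n r i

/-- H(z) = 1/Eᵣ(z) -/
def Hser (n r : ℕ) : PowerSeries (Br n r) := (Eser n r).invOfUnit 1

/-- hⱼ : coefficient of zʲ in 1/Eᵣ(z) -/
def hpl (n r : ℕ) (j : ℕ) : Br n r := PowerSeries.coeff j (Hser n r)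

/-- hⱼ(c) : coefficient of zʲ in c(z)/Eᵣ(z) -/
def hcc (n r : ℕ) (j : ℕ) : Br n r := PowerSeries.coeff j (cser n r * Hser n r)

def hplZ (n r : ℕ) (j : ℤ) : Br n r := if 0 ≤ j then hpl n r j.toNat else 0
def hccZ (n r : ℕ) (j : ℤ) : Br n r := if 0 ≤ j then hcc n r j.toNat else 0

/-- the ideal I_{r,n}(c) = (h_{n-r+1}(c),…,hₙ(c)) -/
def Irn (n r : ℕ) : Ideal (Br n r) := Ideal.span (hcc n r '' Set.Icc (n - r + 1) n)

/-- Xʲ(c) = ∑ᵢ (-1)ⁱ cᵢ X^{j-i} -/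
def Xc (n : ℕ) (j : ℕ) : Polynomial (B0 n) :=
  ∑ i ∈ Finset.range (j + 1),
    (-1 : Polynomial (B0 n)) ^ i * Polynomial.C (cc n i) * Polynomial.X ^ (j - i)

/-- the Schur determinant Δ_λ(Hᵣ(c)) -/
def Dl (n r : ℕ) (lam : Fin r → ℕ) : Br n r :=
  Matrix.det (Matrix.of fun i j : Fin r => hccZ n r ((lam j : ℤ) + (i : ℤ) - (j : ℤ)))

abbrev ExtA (n : ℕ) : Type := ExteriorAlgebra (B0 n) (Polynomial (B0 n))

def wedge (n r : ℕ) (g : Fin r → Polynomial (B0 n)) : ExtA n :=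
  ExteriorAlgebra.ιMulti (B0 n) r g

/-- the Laksov–Thorup module structure: eᵢ acts as the component σ̄ᵢ of the
inverse Schubert derivation, i.e. `σ̄(z)(v₁∧⋯∧vᵣ) = ∏ (vⱼ - X·vⱼ z)`. -/
def ActSpec (n r : ℕ)
    (act : Br n r →ₐ[B0 n] Module.End (B0 n) (ExtA n)) : Prop :=
  ∀ (i : Fin r) (g : Fin r → Polynomial (B0 n)),
    act (MvPolynomial.X i) (wedge n r g) =
      ∑ S ∈ Finset.powersetCard ((i : ℕ) + 1) (Finset.univ : Finset (Fin r)),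
        wedge n r fun j => if j ∈ S then Polynomial.X * g j else g j

end

/-! Since `Eᵣ(z) · (c(z)/Eᵣ(z)) = c(z)`, comparing coefficients gives
`(-1)ᵏ cₖ = ∑_{i+j=k} (-1)ⁱ eᵢ hⱼ(c)`. Modulo `I_{r,n}(c)` the coefficients `hⱼ(c)` with
`n - r < j ≤ n` vanish and `eᵢ = 0` for `i > r`, so in degrees `≤ n` the series `c(z)` is the
product of the polynomials `Eᵣ(z)` of degree `r` and `∑_{j ≤ n-r} hⱼ(c) zʲ` of degree `n - r`.
Both sides have degree `≤ n`, so this is an identity of polynomials, and reversing it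
(`z ↦ 1/X`, times `Xⁿ`) gives the factorization. -/

open Finset

namespace Polynomial

variable {R : Type*} [Semiring R]

theorem reflect_sum {ι : Type*} (N : ℕ) (s : Finset ι) (f : ι → R[X]) :
    reflect N (∑ i ∈ s, f i) = ∑ i ∈ s, reflect N (f i) :=
  map_sum (⟨⟨reflect N, reflect_zero⟩, fun f g => reflect_add f g N⟩ : R[X] →+ R[X]) f s

theorem reflect_sum_range_C_mul_X_pow (N : ℕ) (f : ℕ → R) :
    reflect N (∑ i ∈ range (N + 1), C (f i) * X ^ i) =
      ∑ i ∈ range (N + 1), C (f i) * X ^ (N - i) := by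
  rw [reflect_sum]
  refine Finset.sum_congr rfl fun i hi => ?_
  rw [reflect_C_mul_X_pow, revAt_le (Nat.lt_succ_iff.mp (Finset.mem_range.mp hi))]

theorem natDegree_sum_range_C_mul_X_pow_le (N : ℕ) (f : ℕ → R) :
    (∑ i ∈ range (N + 1), C (f i) * X ^ i).natDegree ≤ N :=
  natDegree_sum_le_of_forall_le _ _ fun _ hi =>
    (natDegree_C_mul_X_pow_le _ _).trans (Nat.lt_succ_iff.mp (Finset.mem_range.mp hi))

theorem coeff_sum_range_C_mul_X_pow (N : ℕ) (f : ℕ → R) (k : ℕ) :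
    (∑ i ∈ range (N + 1), C (f i) * X ^ i).coeff k = if k ≤ N then f k else 0 := by
  simp [finsetSum_coeff]

variable {f g h : ℕ → R} {n r : ℕ}

theorem sum_range_C_mul_X_pow_eq_mul_of_eq_sum_antidiagonal (hrn : r ≤ n)
    (hf : ∀ k ≤ n, f k = ∑ p ∈ antidiagonal k, g p.1 * h p.2)
    (hg : ∀ i, r < i → g i = 0) (hh : ∀ j, n - r < j → j ≤ n → h j = 0) :
    ∑ i ∈ range (n + 1), C (f i) * X ^ i =
      (∑ i ∈ range (r + 1), C (g i) * X ^ i) *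
        ∑ i ∈ range (n - r + 1), C (h i) * X ^ i := by
  ext k
  simp only [coeff_mul, coeff_sum_range_C_mul_X_pow]
  have hterm : ∀ p ∈ antidiagonal k,
      ((if p.1 ≤ r then g p.1 else 0) * if p.2 ≤ n - r then h p.2 else 0) =
        if k ≤ n then g p.1 * h p.2 else 0 := by
    intro p hp
    rw [HasAntidiagonal.mem_antidiagonal] at hp
    by_cases hk : k ≤ n
    · rw [if_pos hk]
      by_cases h1 : p.1 ≤ r
      · by_cases h2 : p.2 ≤ n - r
        · rw [if_pos h1, if_pos h2]
        · rw [if_pos h1, if_neg h2, hh p.2 (by omega) (by omega), mul_zero]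
      · rw [if_neg h1, hg p.1 (by omega), zero_mul, zero_mul]
    · rw [if_neg hk]
      by_cases h1 : p.1 ≤ r
      · rw [if_neg (show ¬p.2 ≤ n - r by omega), mul_zero]
      · rw [if_neg h1, zero_mul]
  rw [Finset.sum_congr rfl hterm]
  split_ifs with hk
  · exact hf k hk
  · simp

theorem sum_range_C_mul_X_pow_sub_eq_mul_of_eq_sum_antidiagonal (hrn : r ≤ n)
    (hf : ∀ k ≤ n, f k = ∑ p ∈ antidiagonal k, g p.1 * h p.2)
    (hg : ∀ i, r < i → g i = 0) (hh : ∀ j, n - r < j → j ≤ n → h j = 0) :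
    ∑ i ∈ range (n + 1), C (f i) * X ^ (n - i) =
      (∑ i ∈ range (r + 1), C (g i) * X ^ (r - i)) *
        ∑ i ∈ range (n - r + 1), C (h i) * X ^ (n - r - i) := by
  have hmul := reflect_mul _ _ (natDegree_sum_range_C_mul_X_pow_le r g)
    (natDegree_sum_range_C_mul_X_pow_le (n - r) h)
  rw [Nat.add_sub_cancel' hrn] at hmul
  have hreflect :=
    congrArg (reflect n) (sum_range_C_mul_X_pow_eq_mul_of_eq_sum_antidiagonal hrn hf hg hh)
  rwa [hmul, reflect_sum_range_C_mul_X_pow, reflect_sum_range_C_mul_X_pow,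
    reflect_sum_range_C_mul_X_pow] at hreflect

end Polynomial

theorem ee_eq_zero_of_lt (n r : ℕ) {i : ℕ} (hi : r < i) : ee n r i = 0 := by
  obtain ⟨i, rfl⟩ := Nat.exists_eq_succ_of_ne_zero (by omega : i ≠ 0)
  rw [ee, dif_neg (by omega)]

theorem hcc_mem_Irn (n r : ℕ) {j : ℕ} (hj₁ : n - r < j) (hj₂ : j ≤ n) : hcc n r j ∈ Irn n r :=
  Ideal.subset_span ⟨j, ⟨hj₁, hj₂⟩, rfl⟩

theorem Eser_mul_Hser (n r : ℕ) : Eser n r * Hser n r = 1 :=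
  PowerSeries.mul_invOfUnit _ _ (by simp [Eser, ee])

theorem neg_one_pow_mul_C_cc_eq_sum_antidiagonal (n r k : ℕ) :
    ((-1) ^ k * MvPolynomial.C (cc n k) : Br n r) =
      ∑ p ∈ antidiagonal k, (-1) ^ p.1 * ee n r p.1 * hcc n r p.2 := by
  have hcser : cser n r = Eser n r * (cser n r * Hser n r) := by
    rw [← mul_assoc, mul_comm (Eser n r), mul_assoc, Eser_mul_Hser, mul_one]
  simpa [cser, Eser, hcc, PowerSeries.coeff_mul] using congrArg (PowerSeries.coeff k) hcser

theorem stmt0_general (n r : ℕ) (h2 : r ≤ n) :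
    (∑ i ∈ Finset.range (n + 1),
        Polynomial.C (Ideal.Quotient.mk (Irn n r) ((-1) ^ i * MvPolynomial.C (cc n i))) *
          Polynomial.X ^ (n - i)) =
      (∑ i ∈ Finset.range (r + 1),
          Polynomial.C (Ideal.Quotient.mk (Irn n r) ((-1) ^ i * ee n r i)) *
            Polynomial.X ^ (r - i)) *
        (∑ i ∈ Finset.range (n - r + 1),
          Polynomial.C (Ideal.Quotient.mk (Irn n r) (hcc n r i)) *
            Polynomial.X ^ (n - r - i)) := by
  set π := Ideal.Quotient.mk (Irn n r)
  refine Polynomial.sum_range_C_mul_X_pow_sub_eq_mul_of_eq_sum_antidiagonal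
    (f := fun i => π ((-1) ^ i * MvPolynomial.C (cc n i))) (g := fun i => π ((-1) ^ i * ee n r i))
    (h := fun i => π (hcc n r i)) h2 (fun k _ => ?_) (fun i hi => ?_) (fun j hj₁ hj₂ => ?_)
  · simp only [neg_one_pow_mul_C_cc_eq_sum_antidiagonal, map_sum, map_mul]
  · rw [ee_eq_zero_of_lt n r hi, mul_zero, map_zero]
  · exact Ideal.Quotient.eq_zero_iff_mem.mpr (hcc_mem_Irn n r hj₁ hj₂)

/-- universal factorization of Xⁿ(c) in B_{r,n}(c)[X]. -/
theorem stmt0 (n r : ℕ) (h1 : 1 ≤ r) (h2 : r ≤ n) :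
    (∑ i ∈ Finset.range (n + 1),
        Polynomial.C (Ideal.Quotient.mk (Irn n r) ((-1) ^ i * MvPolynomial.C (cc n i))) *
          Polynomial.X ^ (n - i)) =
      (∑ i ∈ Finset.range (r + 1),
          Polynomial.C (Ideal.Quotient.mk (Irn n r) ((-1) ^ i * ee n r i)) *
            Polynomial.X ^ (r - i)) *
        (∑ i ∈ Finset.range (n - r + 1),
          Polynomial.C (Ideal.Quotient.mk (Irn n r) (hcc n r i)) *
            Polynomial.X ^ (n - r - i)) :=
  stmt0_general n r h2
end

section
/- If λ is a partition of length at most r with λ₁ ≥ n - r + 1, then the Schur determinant Δ_λ(Hᵣ(c)) = det(h_{λⱼ+i-j}(c))_{1≤i,j≤r} belongs to the ideal I_{r,n}(c) = (h_{n-r+1}(c), ..., hₙ(c)) of Bᵣ(c). -/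
open PowerSeries Polynomial

set_option synthInstance.maxHeartbeats 1000000
set_option maxHeartbeats 1000000

/-! Every entry of the first column of the Schur matrix is some `h_k(c)` with
`k ≥ λ₁ ≥ n - r + 1`, so the determinant vanishes modulo `I_{r,n}(c)`. Membership of all these
`h_k(c)` comes from `Eᵣ(z) · (c(z)/Eᵣ(z)) = c(z)`: for `k > n` the coefficient of `zᵏ` gives a
recursion expressing `h_k(c)` through `h_{k-1}(c), …, h_{k-r}(c)`, all of index `≥ n - r + 1`. -/

theorem Matrix.det_mem_of_column_mem {ι R : Type*} [Fintype ι] [DecidableEq ι] [CommRing R]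
    {I : Ideal R} (M : Matrix ι ι R) (j : ι) (hM : ∀ i, M i j ∈ I) : M.det ∈ I := by
  rw [← Ideal.Quotient.eq_zero_iff_mem, RingHom.map_det]
  exact Matrix.det_eq_zero_of_column_eq_zero j fun i ↦ Ideal.Quotient.eq_zero_iff_mem.mpr (hM i)

namespace PowerSeries

variable {R : Type*} [CommRing R]

theorem coeff_eq_sub_sum_of_mul_eq {E F G : R⟦X⟧} (h : E * F = G) (hE : constantCoeff E = 1)
    (k : ℕ) :
    coeff k F = coeff k G - ∑ p ∈ Finset.range k, coeff (p + 1) E * coeff (k - (p + 1)) F := by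
  rw [← h, coeff_mul, Finset.Nat.sum_antidiagonal_eq_sum_range_succ_mk, Finset.sum_range_succ']
  simp [hE]

theorem coeff_mem_ideal_of_mul_eq {E F G : R⟦X⟧} {I : Ideal R} {m n r : ℕ} (h : E * F = G)
    (hE : constantCoeff E = 1) (hEr : ∀ i, r < i → coeff i E = 0)
    (hGn : ∀ k, n < k → coeff k G = 0) (hmr : m + r ≤ n + 1)
    (hI : ∀ k, m ≤ k → k ≤ n → coeff k F ∈ I) (k : ℕ) (hk : m ≤ k) : coeff k F ∈ I := by
  induction k using Nat.strong_induction_on with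
  | _ k ih =>
    by_cases hkn : k ≤ n
    · exact hI k hk hkn
    rw [coeff_eq_sub_sum_of_mul_eq h hE, hGn k (by omega), zero_sub]
    refine I.neg_mem (I.sum_mem fun p hp ↦ ?_)
    rw [Finset.mem_range] at hp
    by_cases hpr : p + 1 ≤ r
    · exact I.mul_mem_left _ (ih _ (by omega) (by omega))
    · simp [hEr (p + 1) (by omega)]

end PowerSeries

theorem Eser_mul_cser_mul_Hser (n r : ℕ) : Eser n r * (cser n r * Hser n r) = cser n r := by
  rw [mul_left_comm, Hser, PowerSeries.mul_invOfUnit _ _ (by simp [Eser, ee]), mul_one]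

theorem constantCoeff_Eser (n r : ℕ) : PowerSeries.constantCoeff (Eser n r) = 1 := by
  simp [Eser, ee, ← PowerSeries.coeff_zero_eq_constantCoeff_apply]

theorem coeff_Eser_of_lt (n r : ℕ) {i : ℕ} (hi : r < i) : PowerSeries.coeff i (Eser n r) = 0 := by
  obtain ⟨i, rfl⟩ : ∃ j, i = j + 1 := ⟨i - 1, by omega⟩
  simp [Eser, ee, show ¬ i < r by omega]

theorem coeff_cser_of_lt (n r : ℕ) {k : ℕ} (hk : n < k) : PowerSeries.coeff k (cser n r) = 0 := by
  obtain ⟨k, rfl⟩ : ∃ j, k = j + 1 := ⟨k - 1, by omega⟩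
  simp [cser, cc, show ¬ k < n by omega]

theorem hcc_mem_Irn_s11 {n r : ℕ} (hrn : r ≤ n) {k : ℕ} (hk : n - r + 1 ≤ k) : hcc n r k ∈ Irn n r :=
  PowerSeries.coeff_mem_ideal_of_mul_eq (Eser_mul_cser_mul_Hser n r) (constantCoeff_Eser n r)
    (fun _ ↦ coeff_Eser_of_lt n r) (fun _ ↦ coeff_cser_of_lt n r) (by omega)
    (fun k hk hkn ↦ Ideal.subset_span (Set.mem_image_of_mem (hcc n r) (Set.mem_Icc.mpr ⟨hk, hkn⟩)))
    k hk

/-- if λ₁ ≥ n-r+1 then Δ_λ(Hᵣ(c)) ∈ I_{r,n}(c). -/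
theorem stmt11 (n r : ℕ) (h1 : 1 ≤ r) (h2 : r ≤ n)
    (lam : Fin r → ℕ)
    (hl : n - r + 1 ≤ lam ⟨0, by omega⟩) : Dl n r lam ∈ Irn n r := by
  refine Matrix.det_mem_of_column_mem _ ⟨0, by omega⟩ fun i ↦ ?_
  rw [Matrix.of_apply, Fin.val_mk, Nat.cast_zero, sub_zero, hccZ, if_pos (by omega)]
  exact hcc_mem_Irn_s11 h2 (by omega)
end

section
/- For every 0 ≤ i, j ≤ n−1, the operator Xⁱ(c) ⊗ ∂ʲ(s) ∈ gl(Vₙ(c)), acting on Bᵣ(c) via the Laksov–Thorup isomorphism Bᵣ(c) ≅ ∧ʳV(c) and the formula (f⊗g)⋆u·[X(c)]ʳ₀ = f ∧ (g ⌟ u·[X(c)]ʳ₀), preserves the ideal I_{r,n}(c) = (h_{n-r+1}(c),...,hₙ(c)); hence the action descends to a well-defined action on the universal decomposition algebra B_{r,n}(c) = Bᵣ(c)/I_{r,n}(c). -/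
open PowerSeries Polynomial

set_option synthInstance.maxHeartbeats 1000000
set_option maxHeartbeats 1000000

noncomputable section

/-- s(w) = 1/c(w) ∈ B₀(c)[[w]] : sᵢ is the i-th coefficient. -/
def sc (n : ℕ) (i : ℕ) : B0 n :=
  PowerSeries.coeff i ((PowerSeries.mk fun i => (-1) ^ i * cc n i).invOfUnit 1)

/-- ∂ʲ(s) = ∑ᵢ sᵢ ∂^{i+j} : the coefficient of w⁻ʲ in s(w)∂(w⁻¹), defined by its
values ∂ʲ(s)(Xⁱ) = s_{i-j} (for i ≥ j) on the monomial basis. -/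
def ds (n : ℕ) (j : ℕ) : Polynomial (B0 n) →ₗ[B0 n] B0 n :=
  (Polynomial.basisMonomials (B0 n)).constr (B0 n)
    (fun i => if j ≤ i then sc n (i - j) else 0)

end
noncomputable section
/-- the r-th exterior power ∧ʳV(c): the span of the r-fold wedges. -/
def Wr (n r : ℕ) : Submodule (B0 n) (ExtA n) :=
  Submodule.span (B0 n) (Set.range (wedge n r))

/-- Vⁿ(c) ∧ ∧^{r-1}V(c), where Vⁿ(c) = span{Xʲ(c) : j ≥ n}. -/
def VnWedge (n r : ℕ) : Submodule (B0 n) (ExtA n) :=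
  Submodule.span (B0 n)
    {x | ∃ j : ℕ, n ≤ j ∧ ∃ g : Fin (r - 1) → Polynomial (B0 n),
      x = ExteriorAlgebra.ι (B0 n) (Xc n j) * wedge n (r - 1) g}
end

/-!
Contraction with `d` lowers the degree by one and obeys `d ⌟ (w ∧ y) = d(w) y - w ∧ (d ⌟ y)`.
A generator of `Vⁿ(c) ∧ ∧^{r-1}V(c)` has the form `Xᵏ(c) ∧ y` with `k ≥ n`, and `∂ʲ(s)` kills
`Xᵏ(c)` for `j < n ≤ k` because `s(w) c(w) = 1`. Hence
`Xⁱ(c) ∧ (∂ʲ(s) ⌟ (Xᵏ(c) ∧ y)) = Xᵏ(c) ∧ (Xⁱ(c) ∧ (∂ʲ(s) ⌟ y))`, and the right-hand factor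
still has degree `r - 1`.
-/

namespace ExteriorAlgebra

variable {R M : Type*} [CommRing R] [AddCommGroup M] [Module R M]

theorem ι_mul_mem_exteriorPower_succ (v : M) {m : ℕ} {x : ExteriorAlgebra R M}
    (hx : x ∈ ⋀[R]^m M) : ι R v * x ∈ ⋀[R]^(m + 1) M := by
  rw [exteriorPower, pow_succ']
  exact Submodule.mul_mem_mul (LinearMap.mem_range_self _ v) hx

theorem contractLeft_eq_zero_of_mem_exteriorPower_zero (d : Module.Dual R M)
    {x : ExteriorAlgebra R M} (hx : x ∈ ⋀[R]^0 M) :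
    CliffordAlgebra.contractLeft d x = 0 := by
  rw [exteriorPower, pow_zero, Submodule.mem_one] at hx
  obtain ⟨a, rfl⟩ := hx
  exact CliffordAlgebra.contractLeft_algebraMap 0 d a

theorem ι_mul_contractLeft_mem_exteriorPower (v : M) (d : Module.Dual R M) {m : ℕ}
    {x : ExteriorAlgebra R M} (hx : x ∈ ⋀[R]^m M) :
    ι R v * CliffordAlgebra.contractLeft d x ∈ ⋀[R]^m M := by
  induction m generalizing v x with
  | zero =>
    rw [contractLeft_eq_zero_of_mem_exteriorPower_zero d hx, mul_zero]
    exact Submodule.zero_mem _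
  | succ m ih =>
    refine ι_mul_mem_exteriorPower_succ v ?_
    rw [exteriorPower, pow_succ'] at hx
    refine Submodule.mul_induction_on hx ?_ fun a b ha hb => by
      rw [map_add]; exact Submodule.add_mem _ ha hb
    rintro _ ⟨w, rfl⟩ b hb
    rw [CliffordAlgebra.contractLeft_ι_mul]
    exact Submodule.sub_mem _ (Submodule.smul_mem _ _ hb) (ih w hb)

theorem ι_mul_contractLeft_ι_mul_of_apply_eq_zero (v : M) {d : Module.Dual R M} {w : M}
    (hw : d w = 0) (y : ExteriorAlgebra R M) :
    ι R v * CliffordAlgebra.contractLeft d (ι R w * y) =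
      ι R w * (ι R v * CliffordAlgebra.contractLeft d y) := by
  rw [CliffordAlgebra.contractLeft_ι_mul, hw, zero_smul, zero_sub, mul_neg, ← mul_assoc,
    eq_neg_of_add_eq_zero_left (ι_add_mul_swap v w), neg_mul, neg_neg, mul_assoc]

end ExteriorAlgebra

theorem sum_neg_one_pow_mul_cc_mul_sc_eq_zero (n : ℕ) {m : ℕ} (hm : 0 < m) :
    ∑ k ∈ Finset.range (m + 1), (-1 : B0 n) ^ k * cc n k * sc n (m - k) = 0 := by
  have hinv : (PowerSeries.mk fun i => (-1 : B0 n) ^ i * cc n i) *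
      (PowerSeries.mk fun i => (-1 : B0 n) ^ i * cc n i).invOfUnit 1 = 1 :=
    PowerSeries.mul_invOfUnit _ _ (by simp [cc])
  have hcoeff := congrArg (PowerSeries.coeff m) hinv
  rw [PowerSeries.coeff_mul, PowerSeries.coeff_one, if_neg hm.ne',
    Finset.Nat.sum_antidiagonal_eq_sum_range_succ_mk] at hcoeff
  simpa [sc, mul_assoc] using hcoeff

theorem ds_X_pow (n j m : ℕ) :
    ds n j (Polynomial.X ^ m) = if j ≤ m then sc n (m - j) else 0 := by
  have hbasis : (Polynomial.X ^ m : (B0 n)[X]) = basisMonomials (B0 n) m := by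
    rw [coe_basisMonomials, X_pow_eq_monomial]
  rw [ds, hbasis, Module.Basis.constr_basis]

theorem ds_Xc_eq_zero {n j k : ℕ} (hj : j < n) (hk : n ≤ k) : ds n j (Xc n k) = 0 := by
  have hterm : ∀ l ∈ Finset.range (k + 1),
      ds n j ((-1 : (B0 n)[X]) ^ l * Polynomial.C (cc n l) * Polynomial.X ^ (k - l)) =
        if l ∈ Finset.range (k - j + 1) then (-1 : B0 n) ^ l * cc n l * sc n (k - j - l)
        else 0 := by
    intro l hl
    rw [← Polynomial.C_1, ← Polynomial.C_neg, ← Polynomial.C_pow, ← Polynomial.C_mul,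
      ← Polynomial.smul_eq_C_mul, map_smul, ds_X_pow, smul_eq_mul]
    simp only [Finset.mem_range] at hl ⊢
    split_ifs with hle hlt hlt
    · rw [Nat.sub_right_comm]
    · omega
    · omega
    · rw [mul_zero]
  rw [Xc, map_sum, Finset.sum_congr rfl hterm, ← Finset.sum_filter,
    Finset.filter_mem_eq_inter,
    Finset.inter_eq_right.2 (Finset.range_subset_range.2 (by omega))]
  exact sum_neg_one_pow_mul_cc_mul_sc_eq_zero n (by omega)

theorem ι_Xc_mul_mem_VnWedge {n r k : ℕ} (hk : n ≤ k) {z : ExtA n}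
    (hz : z ∈ ⋀[B0 n]^(r - 1) (B0 n)[X]) :
    ExteriorAlgebra.ι (B0 n) (Xc n k) * z ∈ VnWedge n r := by
  rw [← ExteriorAlgebra.ιMulti_span_fixedDegree] at hz
  refine (Submodule.span_le (p := (VnWedge n r).comap
    (LinearMap.mulLeft (B0 n) (ExteriorAlgebra.ι (B0 n) (Xc n k))))).2 ?_ hz
  rintro _ ⟨g, rfl⟩
  exact Submodule.subset_span ⟨k, hk, g, rfl⟩

theorem stmt14_general (n r : ℕ) (h1 : 1 ≤ r) (h2 : r ≤ n)
    (i j : ℕ) (hj : j ≤ n - 1)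
    (x : ExtA n) (hx : x ∈ VnWedge n r) :
    ExteriorAlgebra.ι (B0 n) (Xc n i) *
        CliffordAlgebra.contractLeft (Q := (0 : QuadraticForm (B0 n) (Polynomial (B0 n))))
          (ds n j) x ∈ VnWedge n r := by
  have hjn : j < n := by omega
  refine (Submodule.span_le (p := (VnWedge n r).comap
    (LinearMap.mulLeft (B0 n) (ExteriorAlgebra.ι (B0 n) (Xc n i)) ∘ₗ
      CliffordAlgebra.contractLeft (ds n j)))).2 ?_ hx
  rintro _ ⟨k, hk, g, rfl⟩
  rw [SetLike.mem_coe, Submodule.mem_comap, LinearMap.comp_apply, LinearMap.mulLeft_apply,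
    ExteriorAlgebra.ι_mul_contractLeft_ι_mul_of_apply_eq_zero _ (ds_Xc_eq_zero hjn hk)]
  exact ι_Xc_mul_mem_VnWedge hk (ExteriorAlgebra.ι_mul_contractLeft_mem_exteriorPower _ _
    (ExteriorAlgebra.ιMulti_range _ _ ⟨g, rfl⟩))

/-- for 0 ≤ i,j ≤ n-1 the operator Xⁱ(c)⊗∂ʲ(s), acting on ∧ʳV(c)
by u ↦ Xⁱ(c) ∧ (∂ʲ(s) ⌟ u), preserves the submodule Vⁿ(c)∧∧^{r-1}V(c)
corresponding to the ideal I_{r,n}(c); hence it descends to B_{r,n}(c). -/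
theorem stmt14 (n r : ℕ) (h1 : 1 ≤ r) (h2 : r ≤ n)
    (i j : ℕ) (hi : i ≤ n - 1) (hj : j ≤ n - 1)
    (x : ExtA n) (hx : x ∈ VnWedge n r) :
    ExteriorAlgebra.ι (B0 n) (Xc n i) *
        CliffordAlgebra.contractLeft (Q := (0 : QuadraticForm (B0 n) (Polynomial (B0 n))))
          (ds n j) x ∈ VnWedge n r :=
  stmt14_general n r h1 h2 i j hj x hx
end

section
/- (Eigenvalue property of the Schubert derivation) Let σ₊(z) = exp(∑_{i≥1}(1/i)δ(Xⁱ)zⁱ) be the Hasse–Schmidt derivation on ∧V(c) whose degree-i component restricted to V(c) is multiplication by Xⁱ, and endow ∧ʳV(c) with the Bᵣ(c)-module structure hᵢu = σᵢu. Then for every u ∈ ∧ʳV(c), applying σ₊(z) to u yields (1/Eᵣ(z))·u in the sense that σ₊(z)u = Hᵣ(z)u = (∑ⱼhⱼzʲ)u, i.e. ∧ʳV(c) is an 'eigenspace' of σ₊(z) with eigenvalue 1/Eᵣ(z). -/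
open PowerSeries Polynomial

set_option synthInstance.maxHeartbeats 1000000
set_option maxHeartbeats 1000000

/-!
Write `F e := X^{e₁}g₁ ∧ ⋯ ∧ X^{e_r}g_r`, so that `eₖ` sends `F d` to `∑_{|S|=k} F (d + 1_S)`.
Since `Eᵣ(z)Hᵣ(z) = 1`, the `hₘ` obey `∑ₖ (-1)ᵏ eₖ hₘ₋ₖ = 0` for `m > 0`, and by strong induction on
`m` it suffices that the sums `σₘ = ∑_{|d|=m} F d` obey the same recursion. That is the identity
`∏ⱼ (1 - xⱼ) · ∏ⱼ (1 - xⱼ)⁻¹ = 1` read off coefficientwise: regrouping the terms by `e = d + 1_S`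
leaves `∑_{S ⊆ supp e} (-1)^|S| = 0` for every `e ≠ 0`.
-/

namespace Finset

lemma sum_range_sum_powersetCard_neg_one_pow_card {α : Type*} {s : Finset α} (hs : s.Nonempty)
    {m : ℕ} (hsm : #s ≤ m) :
    ∑ i ∈ range (m + 1), ∑ t ∈ powersetCard i s, (-1 : ℤ) ^ #t = 0 := by
  rw [← sum_subset (range_subset_range.mpr (Nat.succ_le_succ hsm)) fun i _ hi => by
    rw [powersetCard_eq_empty.mpr (by simpa using hi), sum_empty], ← sum_powerset,
    sum_powerset_neg_one_pow_card_of_nonempty hs]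

lemma card_filter_ne_zero_le_sum {ι : Type*} [Fintype ι] (e : ι → ℕ) :
    #{j | e j ≠ 0} ≤ ∑ j, e j := by
  have h := card_nsmul_le_sum {j | e j ≠ 0} e 1 fun j hj => by
    simpa [Nat.one_le_iff_ne_zero] using hj
  rw [smul_eq_mul, mul_one] at h
  exact h.trans (sum_le_sum_of_subset (subset_univ _))

namespace Nat

variable {M : Type*} {r m : ℕ}

lemma sum_antidiagonalTuple_sub_card_add_indicator [AddCommMonoid M] (S : Finset (Fin r))
    (hS : #S ≤ m) (F : (Fin r → ℕ) → M) :
    ∑ d ∈ antidiagonalTuple r (m - #S), F (fun j => (if j ∈ S then 1 else 0) + d j) =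
      ∑ e ∈ antidiagonalTuple r m with ∀ j ∈ S, e j ≠ 0, F e := by
  have hcard : ∑ j, (if j ∈ S then 1 else 0) = #S := by
    rw [sum_ite_mem, univ_inter, card_eq_sum_ones]
  refine sum_nbij' (fun d j => (if j ∈ S then 1 else 0) + d j)
    (fun e j => e j - if j ∈ S then 1 else 0) ?_ ?_ ?_ ?_ (fun _ _ => rfl)
  · intro d hd
    simp only [mem_filter, mem_antidiagonalTuple] at hd ⊢
    refine ⟨?_, fun j hj => by simp [hj]⟩
    rw [sum_add_distrib, hcard, hd]
    omega
  · intro e he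
    simp only [mem_filter, mem_antidiagonalTuple] at he ⊢
    rw [sum_tsub_distrib _ fun j _ => by
      split_ifs with hj
      · exact Nat.one_le_iff_ne_zero.mpr (he.2 j hj)
      · exact Nat.zero_le _,
      he.1, hcard]
  · intro d _
    funext j
    simp
  · intro e he
    rw [mem_filter] at he
    funext j
    by_cases hj : j ∈ S
    · have := he.2 j hj
      simp only [hj, if_true]
      omega
    · simp [hj]

lemma sum_range_neg_one_pow_smul_sum_powersetCard_antidiagonalTuple [AddCommGroup M]
    (hm : 0 < m) (F : (Fin r → ℕ) → M) :
    ∑ i ∈ range (m + 1), (-1 : ℤ) ^ i • ∑ S ∈ powersetCard i univ,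
      ∑ d ∈ antidiagonalTuple r (m - i), F (fun j => (if j ∈ S then 1 else 0) + d j) = 0 := by
  calc _ = ∑ i ∈ range (m + 1), ∑ S ∈ powersetCard i univ,
        ∑ e ∈ antidiagonalTuple r m, if ∀ j ∈ S, e j ≠ 0 then (-1 : ℤ) ^ #S • F e else 0 := by
        refine sum_congr rfl fun i hi => ?_
        rw [smul_sum]
        refine sum_congr rfl fun S hS => ?_
        obtain rfl := (mem_powersetCard.mp hS).2
        rw [sum_antidiagonalTuple_sub_card_add_indicator S (by simpa using hi), smul_sum,
          sum_filter]
    _ = ∑ e ∈ antidiagonalTuple r m, (∑ i ∈ range (m + 1),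
          ∑ S ∈ powersetCard i {j | e j ≠ 0}, (-1 : ℤ) ^ #S) • F e := by
        simp_rw [sum_smul]
        rw [sum_congr rfl fun i _ => sum_comm, sum_comm]
        refine sum_congr rfl fun e _ => sum_congr rfl fun i _ => ?_
        rw [← sum_filter]
        congr 1
        ext S
        simp [mem_powersetCard, subset_iff, and_comm]
    _ = 0 := by
        refine sum_eq_zero fun e he => ?_
        rw [mem_antidiagonalTuple] at he
        have hne : ({j | e j ≠ 0} : Finset (Fin r)).Nonempty :=
          filter_nonempty_iff.mpr (exists_ne_zero_of_sum_ne_zero (he ▸ hm.ne'))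
        rw [sum_range_sum_powersetCard_neg_one_pow_card hne (he ▸ card_filter_ne_zero_le_sum e),
          zero_smul]

end Nat

end Finset

open Finset

lemma hpl_zero (n r : ℕ) : hpl n r 0 = 1 := by
  rw [hpl, Hser, PowerSeries.coeff_zero_eq_constantCoeff, PowerSeries.constantCoeff_invOfUnit]
  simp

lemma sum_neg_one_pow_smul_ee_mul_hpl (n r : ℕ) {m : ℕ} (hm : 0 < m) :
    ∑ k ∈ range (m + 1), (-1 : ℤ) ^ k • (ee n r k * hpl n r (m - k)) = 0 := by
  have hE : PowerSeries.constantCoeff (Eser n r) = ((1 : (Br n r)ˣ) : Br n r) := by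
    simp [Eser, ee]
  have h := congrArg (PowerSeries.coeff m) (PowerSeries.mul_invOfUnit (Eser n r) 1 hE)
  rw [PowerSeries.coeff_mul, PowerSeries.coeff_one, if_neg hm.ne',
    Finset.Nat.sum_antidiagonal_eq_sum_range_succ_mk] at h
  rw [← h]
  refine sum_congr rfl fun k _ => ?_
  simp only [hpl, Hser, Eser, PowerSeries.coeff_mk, zsmul_eq_mul, Int.cast_pow, Int.cast_neg,
    Int.cast_one, mul_assoc]

lemma act_ee_wedge {n r : ℕ} {act : Br n r →ₐ[B0 n] Module.End (B0 n) (ExtA n)}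
    (hact : ActSpec n r act) (k : ℕ) (g : Fin r → Polynomial (B0 n)) :
    act (ee n r k) (wedge n r g) =
      ∑ S ∈ powersetCard k univ,
        wedge n r fun j => Polynomial.X ^ (if j ∈ S then 1 else 0) * g j := by
  rcases k with _ | k
  · simp [ee]
  by_cases hk : k < r
  · rw [show ee n r (k + 1) = MvPolynomial.X ⟨k, hk⟩ by simp [ee, hk], hact ⟨k, hk⟩ g]
    refine sum_congr rfl fun S _ => congrArg _ (funext fun j => ?_)
    split_ifs <;> simp
  · rw [show ee n r (k + 1) = 0 by simp [ee, hk], map_zero, LinearMap.zero_apply,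
      powersetCard_eq_empty.mpr (by simpa using hk), sum_empty]

/-- the eigenvalue property of the Schubert derivation: on ∧ʳV(c),
the m-th component σₘ of σ₊(z) (whose value on a wedge v₁∧⋯∧vᵣ is
∑_{i₁+⋯+iᵣ=m} X^{i₁}v₁∧⋯∧X^{iᵣ}vᵣ) coincides with multiplication by hₘ in the
Laksov–Thorup module structure, i.e. σ₊(z)u = Hᵣ(z)u = (1/Eᵣ(z))u. -/
theorem stmt16 (n r : ℕ)
    (act : Br n r →ₐ[B0 n] Module.End (B0 n) (ExtA n)) (hact : ActSpec n r act)
    (m : ℕ) (g : Fin r → Polynomial (B0 n)) :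
    act (hpl n r m) (wedge n r g) =
      ∑ d ∈ Finset.Nat.antidiagonalTuple r m,
        wedge n r fun j => Polynomial.X ^ d j * g j := by
  induction m using Nat.strong_induction_on with
  | _ m IH =>
  rcases m.eq_zero_or_pos with rfl | hm
  · simp [hpl_zero, Nat.antidiagonalTuple_zero_right]
  set F : (Fin r → ℕ) → ExtA n := fun e => wedge n r fun j => Polynomial.X ^ e j * g j
  have hterm : ∀ k, 0 < k →
      act (ee n r k) (act (hpl n r (m - k)) (wedge n r g)) = ∑ S ∈ powersetCard k univ,
        ∑ d ∈ Nat.antidiagonalTuple r (m - k), F fun j => (if j ∈ S then 1 else 0) + d j := by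
    intro k hk
    rw [IH (m - k) (by omega), map_sum, sum_comm]
    refine sum_congr rfl fun d _ => ?_
    rw [act_ee_wedge hact]
    simp only [F, pow_add, mul_assoc]
  have hrel := congrArg (fun b => act b (wedge n r g)) (sum_neg_one_pow_smul_ee_mul_hpl n r hm)
  simp only [map_sum, map_zsmul, map_mul, LinearMap.sum_apply, LinearMap.smul_apply,
    Module.End.mul_apply, map_zero, LinearMap.zero_apply] at hrel
  have hcomb := Nat.sum_range_neg_one_pow_smul_sum_powersetCard_antidiagonalTuple hm F
  rw [sum_range_succ'] at hrel hcomb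
  rw [sum_congr rfl fun k _ => congrArg _ (hterm (k + 1) k.succ_pos)] at hrel
  simp only [pow_zero, one_smul, Nat.sub_zero, show ee n r 0 = 1 from rfl, map_one,
    Module.End.one_apply, powersetCard_zero, sum_singleton, notMem_empty, if_false,
    zero_add] at hrel hcomb
  exact add_left_cancel (hrel.trans hcomb.symm)
end

section
/- (Wedging with the fundamental monomial shifts partitions) For k ≥ 1 and a partition λ of length at most r with λᵣ ≥ k, one has [X]ᵏ₀ ∧ [X(c)]ʳ_λ-type identity: X^{k-1} ∧ ⋯ ∧ X⁰ ∧ (X^{r-1+λ₁}(c) ∧ ⋯ ∧ X^{λᵣ}(c)) = ± [X(c)]^{r+k}_{λ-(kʳ)}, the basis element of ∧^{r+k}V(c) indexed by the partition (λ₁−k, ..., λᵣ−k) padded with k zeros; the expression vanishes if λᵣ < k. -/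
open PowerSeries Polynomial

set_option synthInstance.maxHeartbeats 1000000
set_option maxHeartbeats 1000000

/-! The polynomials Xʲ(c) are unitriangular in the monomial basis: Xʲ(c) − Xʲ has degree
below j, i.e. lies in the span of the monomials further to the right in X^{k-1} ∧ ⋯ ∧ X⁰.
Hence [X]ᵏ₀ = X^{k-1}(c) ∧ ⋯ ∧ X⁰(c). Graded commutativity of the exterior algebra moves this
k-vector past the r-vector at the cost of (−1)^{kr}, and the resulting r + k factors are those
of [X(c)]^{r+k}_{λ−(kʳ)} when λᵣ ≥ k. When λᵣ < k the factor X^{λᵣ}(c) occurs in both blocks,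
so the product vanishes. -/

namespace AlternatingMap

open Submodule

variable {R M N : Type*} [CommRing R] [AddCommGroup M] [Module R M] [AddCommGroup N]
  [Module R N]

theorem map_update_eq_zero_of_mem_span {ι : Type*} [DecidableEq ι] (f : M [⋀^ι]→ₗ[R] N)
    (v : ι → M) (i : ι) {x : M} (hx : x ∈ span R (v '' {i}ᶜ)) :
    f (Function.update v i x) = 0 := by
  suffices span R (v '' {i}ᶜ) ≤ LinearMap.ker (f.toMultilinearMap.toLinearMap v i) from this hx
  rw [span_le]
  rintro _ ⟨j, hj, rfl⟩
  exact f.map_update_self v (Ne.symm hj)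

theorem map_eq_of_sub_mem_span_Ioi {m : ℕ} (f : M [⋀^Fin m]→ₗ[R] N) (v w : Fin m → M)
    (h : ∀ i, w i - v i ∈ span R (v '' Set.Ioi i)) : f w = f v := by
  let hybrid : ℕ → Fin m → M := fun t i => if (i : ℕ) < t then w i else v i
  suffices ∀ t ≤ m, f (hybrid t) = f v by
    simpa [hybrid] using this m le_rfl
  intro t ht
  induction t with
  | zero => simp [hybrid]
  | succ t ih =>
    let i₀ : Fin m := ⟨t, ht⟩
    have h_succ : hybrid (t + 1) =
        Function.update (hybrid t) i₀ (hybrid t i₀ + (w i₀ - v i₀)) := by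
      funext i
      by_cases hi : i = i₀
      · subst hi
        simp [hybrid, i₀]
      · have hit : (i : ℕ) ≠ t := fun h' => hi (Fin.ext h')
        simp only [Function.update_of_ne hi, hybrid]
        congr 1
        exact propext (by omega)
    have h_span : span R (v '' Set.Ioi i₀) ≤ span R (hybrid t '' {i₀}ᶜ) := by
      refine span_mono ?_
      rintro _ ⟨j, hj, rfl⟩
      refine ⟨j, ne_of_gt hj, ?_⟩
      have : ¬ (j : ℕ) < t := not_lt.2 (le_of_lt hj)
      simp [hybrid, this]
    rw [h_succ, f.map_update_add, Function.update_eq_self,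
      f.map_update_eq_zero_of_mem_span _ _ (h_span (h i₀)), add_zero, ih (by omega)]

end AlternatingMap

namespace ExteriorAlgebra

variable {R M : Type*} [CommRing R] [AddCommGroup M] [Module R M]

theorem ι_mul_ιMulti_comm (x : M) {n : ℕ} (b : Fin n → M) :
    ι R x * ιMulti R n b = (-1 : ℤ) ^ n • (ιMulti R n b * ι R x) := by
  induction n with
  | zero => simp
  | succ n ih =>
    rw [ιMulti_succ_apply, ← mul_assoc, eq_neg_of_add_eq_zero_left (ι_add_mul_swap x (b 0)),
      neg_mul, mul_assoc, ih, mul_smul_comm, pow_succ, mul_neg_one, neg_smul, mul_assoc]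

theorem ιMulti_mul_ιMulti_comm {m n : ℕ} (a : Fin m → M) (b : Fin n → M) :
    ιMulti R m a * ιMulti R n b = (-1 : ℤ) ^ (m * n) • (ιMulti R n b * ιMulti R m a) := by
  induction m with
  | zero => simp
  | succ m ih =>
    rw [ιMulti_succ_apply, mul_assoc, ih, mul_smul_comm, ← mul_assoc, ι_mul_ιMulti_comm,
      smul_mul_assoc, smul_smul, mul_assoc, ← pow_add, Nat.succ_mul, add_comm]

end ExteriorAlgebra

theorem Xc_sub_X_pow_mem_degreeLT (n d : ℕ) :
    Xc n d - Polynomial.X ^ d ∈ degreeLT (B0 n) d := by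
  rw [Xc, Finset.sum_range_succ', pow_zero, one_mul]
  simp only [cc, map_one, one_mul, Nat.sub_zero, add_sub_cancel_right]
  refine Submodule.sum_mem _ fun i hi => mem_degreeLT.2 ?_
  rw [Finset.mem_range] at hi
  refine lt_of_le_of_lt (b := ((d - (i + 1) : ℕ) : WithBot ℕ)) ?_ (by exact_mod_cast (by omega))
  compute_degree
  exact le_rfl

theorem wedge_X_pow_eq_wedge_Xc (n m : ℕ) :
    wedge n m (fun i => Polynomial.X ^ (m - 1 - (i : ℕ))) =
      wedge n m (fun i => Xc n (m - 1 - (i : ℕ))) := by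
  classical
  refine ((ExteriorAlgebra.ιMulti (B0 n) (M := (B0 n)[X]) m).map_eq_of_sub_mem_span_Ioi _ _
    fun i => ?_).symm
  have h := Xc_sub_X_pow_mem_degreeLT n (m - 1 - i)
  rw [degreeLT_eq_span_X_pow] at h
  refine Submodule.span_mono ?_ h
  intro p hp
  obtain ⟨e, he, rfl⟩ := Finset.mem_image.1 hp
  rw [Finset.mem_range] at he
  refine ⟨⟨m - 1 - e, by omega⟩, by rw [Set.mem_Ioi, Fin.lt_def]; dsimp only; omega, ?_⟩
  dsimp only
  congr 1
  omega

/-- wedging with [X]ᵏ₀ = X^{k-1}∧⋯∧X⁰ shifts partitions: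
[X]ᵏ₀ ∧ [X(c)]ʳ_λ = ± [X(c)]^{r+k}_{λ-(kʳ)} if λᵣ ≥ k, and vanishes if λᵣ < k. -/
theorem stmt17 (n r k : ℕ) (hr : 1 ≤ r)
    (lam : Fin r → ℕ) (hlam : Antitone lam) :
    (k ≤ lam ⟨r - 1, by omega⟩ →
      wedge n k (fun i => Polynomial.X ^ (k - 1 - (i : ℕ))) *
          wedge n r (fun j => Xc n (r - 1 - (j : ℕ) + lam j)) =
        ((-1 : ℤ) ^ (k * r)) •
          wedge n (r + k) (fun j => Xc n (r + k - 1 - (j : ℕ) +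
            (if h : (j : ℕ) < r then lam ⟨j, h⟩ - k else 0)))) ∧
    (lam ⟨r - 1, by omega⟩ < k →
      wedge n k (fun i => Polynomial.X ^ (k - 1 - (i : ℕ))) *
          wedge n r (fun j => Xc n (r - 1 - (j : ℕ) + lam j)) = 0) := by
  have h_reorder : wedge n k (fun i => Polynomial.X ^ (k - 1 - (i : ℕ))) *
      wedge n r (fun j => Xc n (r - 1 - (j : ℕ) + lam j)) =
      (-1 : ℤ) ^ (k * r) • wedge n (r + k)
        (Fin.append (fun j : Fin r => Xc n (r - 1 - j + lam j)) fun i : Fin k => Xc n (k - 1 - i)) := by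
    rw [wedge_X_pow_eq_wedge_Xc, wedge, wedge, ExteriorAlgebra.ιMulti_mul_ιMulti_comm,
      ExteriorAlgebra.ιMulti_mul_ιMulti, wedge]
  refine ⟨fun hge => ?_, fun hlt => ?_⟩
  · have hlam_ge : ∀ j, k ≤ lam j := fun j =>
      hge.trans (hlam (Fin.le_def.2 (Nat.le_sub_one_of_lt j.isLt)))
    rw [h_reorder]
    congr 2
    funext j
    refine Fin.addCases (fun j => ?_) (fun i => ?_) j
    · rw [Fin.append_left, Fin.val_castAdd, dif_pos j.isLt, Fin.eta]
      have hj := hlam_ge j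
      congr 1
      omega
    · rw [Fin.append_right, Fin.val_natAdd, dif_neg (by omega)]
      congr 1
      omega
  · rw [h_reorder, wedge, (ExteriorAlgebra.ιMulti _ _).map_eq_zero_of_eq _
      (i := Fin.castAdd k ⟨r - 1, by omega⟩)
      (j := Fin.natAdd r ⟨k - 1 - lam ⟨r - 1, by omega⟩, by omega⟩), smul_zero]
    · simp only [Fin.append_left, Fin.append_right]
      congr 1
      omega
    · exact Fin.ne_of_val_ne (by rw [Fin.val_castAdd, Fin.val_natAdd]; omega)
end
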